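/- arXiv:1310.0530 — 3 statements merged into one kernel-verified Lean document; each statement's English description precedes it below -/
import Mathlib

section
/- Let H be a 2×2 matrix over R and let d₀, d₁ ∈ ℤ. Define the scalar filters H_i(z) := H_{i0}(z²) + z·H_{i1}(z²) for i = 0, 1. Then both scalar filters are whole-sample symmetric with group delays d₀ and d₁ respectively — i.e., σH_i = z^{2d_i}·H_i for i = 0, 1 — if and only if the matrix relation σH = diag(z^{d₀}, z^{d₁})·H·diag(1, z) holds. -/
open LaurentPolynomial Matrix

noncomputable section

/-- `R` = the ring `ℝ[z,z⁻¹]` of Laurent polynomials with real coefficients. -/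
abbrev R2 := LaurentPolynomial ℝ

/-- 2×2 matrices over `R`. -/
abbrev M2 := Matrix (Fin 2) (Fin 2) R2

/-- `SL(2,R)`. -/
abbrev SL2 := Matrix.SpecialLinearGroup (Fin 2) R2

/-- The ℝ-algebra involution `σ` determined by `σ(z) = z⁻¹`. -/
def σ : R2 ≃ₐ[ℝ] R2 := LaurentPolynomial.invert

/-- Entrywise application of `σ` to a matrix; plays the role of `H(z⁻¹)`. -/
def mσ (H : M2) : M2 := H.map fun f => σ f

/-- `Λ = diag(1, z⁻¹)`. -/
def Λm : M2 := Matrix.diagonal ![1, T (-1)]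

/-- `Λ⁻¹ = diag(1, z)`. -/
def Λim : M2 := Matrix.diagonal ![1, T 1]

/-- `L = diag(1, -1)`. -/
def Lm : M2 := Matrix.diagonal ![1, -1]

/-- `J = [[0,1],[1,0]]`. -/
def Jm : M2 := !![0, 1; 1, 0]

/-- Upper-triangular lifting matrix `υ(S) = [[1,S],[0,1]]`. -/
def umat (S : R2) : M2 := !![1, S; 0, 1]

/-- Lower-triangular lifting matrix `λ(S) = [[1,0],[S,1]]`. -/
def lmat (S : R2) : M2 := !![1, 0; S, 1]

/-- Unimodular gain-scaling matrix `D_K = diag(1/K, K)`. -/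
def DKm (K : ℝ) : M2 := Matrix.diagonal ![C K⁻¹, C K]

/-- Conjugation `γ_K(A) = D_K · A · D_K⁻¹`. -/
def γm (K : ℝ) (A : M2) : M2 := DKm K * A * (DKm K)⁻¹

/-- Substitution `z ↦ z²` on Laurent polynomials. -/
def sub2 : R2 →ₐ[ℝ] R2 :=
  AddMonoidAlgebra.mapDomainAlgHom ℝ ℝ
    (AddMonoidHom.mk' (fun n : ℤ => 2 * n) (by intro a b; ring))

/-- The scalar filter `H_i(z) = H_{i0}(z²) + z·H_{i1}(z²)` of row `i` of `H`. -/
def scal (H : M2) (i : Fin 2) : R2 := sub2 (H i 0) + T 1 * sub2 (H i 1)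

/-- Order of a (nonzero) Laurent polynomial: largest minus smallest exponent
with nonzero coefficient. -/
def lorder (f : R2) : ℤ := WithBot.unbotD 0 f.coeff.support.max - WithTop.untopD 0 f.coeff.support.min

/-- Evaluation of a Laurent polynomial at a (nonzero) real number. -/
def lev (x : ℝ) (f : R2) : ℝ := f.coeff.sum fun n a => a * x ^ n

/-- Combined support (in the exponent variable) of all entries of a matrix. -/
def msupp (H : M2) : Finset ℤ :=
  Finset.univ.biUnion fun p : Fin 2 × Fin 2 => (H p.1 p.2).coeff.support

/-- Polyphase order of a (nonzero) matrix Laurent polynomial `H = Σ h(n) z⁻ⁿ`: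
`d - c` where `[c,d]` is the smallest interval with `h(c) ≠ 0 ≠ h(d)`. -/
def morder (H : M2) : ℤ := WithBot.unbotD 0 (msupp H).max - WithTop.untopD 0 (msupp H).min

/-- The product `S_{N-1} ⋯ S_1 · S_0`. -/
def prodRev {M : Type*} [Monoid M] {N : ℕ} (SS : Fin N → M) : M :=
  ((List.ofFn SS).reverse).prod

/-- Partial products: `partialE SS B (n+1) = S_n ⋯ S_0 · B` and `partialE SS B 0 = B`. -/
def partialE {M : Type*} [Monoid M] {N : ℕ} (SS : Fin N → M) (B : M) : ℕ → M
  | 0 => B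
  | n + 1 => (if h : n < N then SS ⟨n, h⟩ else 1) * partialE SS B n

/-- `A` is an upper-triangular lifting matrix. -/
def IsUpper (A : M2) : Prop := ∃ S : R2, A = umat S

/-- `A` is a lower-triangular lifting matrix. -/
def IsLower (A : M2) : Prop := ∃ S : R2, A = lmat S

/-- Strict alternation of the predicates `up`/`lo` along a cascade: no two
consecutive factors are both upper-triangular or both lower-triangular. -/
def AlternatingP {α : Type*} (up lo : α → Prop) {N : ℕ} (SS : Fin N → α) : Prop :=
  ∀ (i : ℕ) (h : i + 1 < N),
    ¬(up (SS ⟨i, by omega⟩) ∧ up (SS ⟨i + 1, h⟩)) ∧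
    ¬(lo (SS ⟨i, by omega⟩) ∧ lo (SS ⟨i + 1, h⟩))

/-- Strict alternation of triangularity along a cascade of matrices. -/
def Alternating {N : ℕ} (SS : Fin N → M2) : Prop := AlternatingP IsUpper IsLower SS

/-- An irreducible cascade of lifting matrices: every factor is a lifting matrix,
no factor is the identity, and triangularity strictly alternates. -/
def IrrCascade {N : ℕ} (SS : Fin N → M2) : Prop :=
  (∀ i, (IsUpper (SS i) ∨ IsLower (SS i)) ∧ SS i ≠ 1) ∧ Alternating SS

/-! Every Laurent polynomial splits uniquely as `F(z²) + z·G(z²)` (even and odd coefficients), and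
`σ(F(z²) + z·G(z²)) = (σF)(z²) + z·(z⁻¹·σG)(z²)`. Comparing parts, `σHᵢ = z^{2dᵢ}·Hᵢ` is
equivalent to `σH_{i0} = z^{dᵢ}·H_{i0}` and `σH_{i1} = z^{dᵢ+1}·H_{i1}`, which is the matrix
relation read entrywise. -/

lemma LaurentPolynomial.coeff_T_mul {R : Type*} [Semiring R] (m n : ℤ) (f : R[T;T⁻¹]) :
    (T m * f).coeff n = f.coeff (n - m) := by
  rw [T, AddMonoidAlgebra.coeff_single_mul_apply, one_mul, neg_add_eq_sub]

lemma LaurentPolynomial.T_neg_mul_eq_iff {R : Type*} [Semiring R] (m : ℤ) (f g : R[T;T⁻¹]) :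
    T (-m) * f = g ↔ f = T m * g := by
  constructor <;> rintro rfl <;> rw [← mul_assoc, ← T_add] <;> simp

lemma coeff_sub2_two_mul (f : R2) (n : ℤ) : (sub2 f).coeff (2 * n) = f.coeff n :=
  Finsupp.mapDomain_apply (fun a b h => by simpa using h) f.coeff n

lemma coeff_sub2_of_odd (f : R2) {n : ℤ} (hn : Odd n) : (sub2 f).coeff n = 0 :=
  Finsupp.mapDomain_of_notMem_range _ _ fun ⟨a, ha⟩ =>
    Int.not_even_iff_odd.2 hn ⟨a, by simp at ha; omega⟩

lemma sub2_T (n : ℤ) : sub2 (T n) = T (2 * n) :=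
  AddMonoidAlgebra.mapDomain_single

lemma σ_sub2 (f : R2) : σ (sub2 f) = sub2 (σ f) := by
  have : (σ : R2 →ₐ[ℝ] R2).comp sub2 = sub2.comp (σ : R2 →ₐ[ℝ] R2) :=
    AddMonoidAlgebra.algHom_ext (fun n => show σ (sub2 (T n)) = sub2 (σ (T n)) by
      rw [sub2_T, σ, invert_T, invert_T, sub2_T, mul_neg]) (Subsingleton.elim _ _)
  exact congr($this f)

def polyphase (f g : R2) : R2 := sub2 f + T 1 * sub2 g

lemma coeff_polyphase_two_mul (f g : R2) (n : ℤ) :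
    (polyphase f g).coeff (2 * n) = f.coeff n := by
  rw [polyphase, AddMonoidAlgebra.coeff_add, Finsupp.add_apply, coeff_T_mul, coeff_sub2_two_mul,
    coeff_sub2_of_odd g ⟨n - 1, by ring⟩, add_zero]

lemma coeff_polyphase_two_mul_add_one (f g : R2) (n : ℤ) :
    (polyphase f g).coeff (2 * n + 1) = g.coeff n := by
  rw [polyphase, AddMonoidAlgebra.coeff_add, Finsupp.add_apply, coeff_T_mul,
    coeff_sub2_of_odd f ⟨n, rfl⟩, add_sub_cancel_right, coeff_sub2_two_mul, zero_add]

lemma polyphase_inj {f g f' g' : R2} : polyphase f g = polyphase f' g' ↔ f = f' ∧ g = g' := by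
  refine ⟨fun h => ⟨?_, ?_⟩, fun ⟨rfl, rfl⟩ => rfl⟩ <;> ext n
  · simpa only [coeff_polyphase_two_mul] using congr(($h).coeff (2 * n))
  · simpa only [coeff_polyphase_two_mul_add_one] using congr(($h).coeff (2 * n + 1))

lemma σ_polyphase (f g : R2) : σ (polyphase f g) = polyphase (σ f) (T (-1) * σ g) := by
  simp only [polyphase, map_add, map_mul, σ_sub2, sub2_T]
  rw [← mul_assoc, ← T_add, σ, invert_T]
  norm_num

lemma T_two_mul_mul_polyphase (d : ℤ) (f g : R2) :
    T (2 * d) * polyphase f g = polyphase (T d * f) (T d * g) := by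
  simp only [polyphase, map_mul, sub2_T]
  ring

lemma σ_polyphase_eq_T_mul_iff (f g : R2) (d : ℤ) :
    σ (polyphase f g) = T (2 * d) * polyphase f g ↔ σ f = T d * f ∧ σ g = T (d + 1) * g := by
  rw [σ_polyphase, T_two_mul_mul_polyphase, polyphase_inj, T_neg_mul_eq_iff, ← mul_assoc,
    ← T_add, add_comm 1]

lemma scal_eq_polyphase (H : M2) (i : Fin 2) : scal H i = polyphase (H i 0) (H i 1) := rfl

lemma mσ_eq_diagonal_mul_mul_iff (H : M2) (d₀ d₁ : ℤ) :
    mσ H = diagonal ![T d₀, T d₁] * H * diagonal ![1, T 1] ↔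
      (σ (H 0 0) = T d₀ * H 0 0 ∧ σ (H 0 1) = T (d₀ + 1) * H 0 1) ∧
        (σ (H 1 0) = T d₁ * H 1 0 ∧ σ (H 1 1) = T (d₁ + 1) * H 1 1) := by
  simp only [← Matrix.ext_iff, Fin.forall_fin_two, mσ, map_apply, mul_diagonal, diagonal_mul,
    T_add, mul_assoc, mul_comm (T 1)]
  simp

/-- polyphase characterization of whole-sample symmetry,
cf. Brislawn–Wohlberg, Lemma 2.  Both scalar filters `H_i(z) = H_{i0}(z²) + z·H_{i1}(z²)`
are whole-sample symmetric with group delays `d₀`, `d₁` (i.e. `σH_i = z^{2dᵢ}·H_i`)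
iff `σH = diag(z^{d₀}, z^{d₁}) · H · diag(1, z)`. -/
theorem stmt0 (H : M2) (d₀ d₁ : ℤ) :
    (σ (scal H 0) = T (2 * d₀) * scal H 0 ∧ σ (scal H 1) = T (2 * d₁) * scal H 1) ↔
      mσ H = Matrix.diagonal ![T d₀, T d₁] * H * Matrix.diagonal ![1, T 1] := by
  rw [scal_eq_polyphase, scal_eq_polyphase, σ_polyphase_eq_T_mul_iff, σ_polyphase_eq_T_mul_iff,
    mσ_eq_diagonal_mul_mul_iff]
end
end

section
/- A matrix H ∈ SL(2,R) satisfies σH = L·H·J if and only if there exist an integer N ≥ 0, lifting matrices S₀, …, S_{N−1}, each of the form υ(S) or λ(S) with σS = −S (whole-sample antisymmetric lifting filters), and a base filter bank B ∈ 𝔅_H, such that H = S_{N−1}⋯S₀·B. -/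
open LaurentPolynomial Matrix

noncomputable section

instance : CoeFun R2 (fun _ => ℤ → ℝ) := ⟨fun f => f.coeff⟩

noncomputable def maxd (f : R2) : ℤ := WithBot.unbotD 0 f.coeff.support.max
noncomputable def mind (f : R2) : ℤ := WithTop.untopD 0 f.coeff.support.min

lemma lorder_eq (f : R2) : lorder f = maxd f - mind f := rfl

lemma supp_nonempty {f : R2} (hf : f ≠ 0) : f.coeff.support.Nonempty :=
  Finsupp.support_nonempty_iff.2 (fun h => hf (AddMonoidAlgebra.coeff_eq_zero.1 h))

lemma maxd_mem {f : R2} (hf : f ≠ 0) : maxd f ∈ f.coeff.support := by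
  have h := supp_nonempty hf
  have : f.coeff.support.max = (f.coeff.support.max' h : ℤ) := (Finset.coe_max' h).symm
  rw [maxd, this, WithBot.unbotD_coe]
  exact Finset.max'_mem _ h

lemma le_maxd {f : R2} {n : ℤ} (hn : n ∈ f.coeff.support) : n ≤ maxd f := by
  have h : f.coeff.support.Nonempty := ⟨n, hn⟩
  have : f.coeff.support.max = (f.coeff.support.max' h : ℤ) := (Finset.coe_max' h).symm
  rw [maxd, this, WithBot.unbotD_coe]
  exact Finset.le_max' _ _ hn

lemma mind_mem {f : R2} (hf : f ≠ 0) : mind f ∈ f.coeff.support := by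
  have h := supp_nonempty hf
  have : f.coeff.support.min = (f.coeff.support.min' h : ℤ) := (Finset.coe_min' h).symm
  rw [mind, this, WithTop.untopD_coe]
  exact Finset.min'_mem _ h

lemma mind_le {f : R2} {n : ℤ} (hn : n ∈ f.coeff.support) : mind f ≤ n := by
  have h : f.coeff.support.Nonempty := ⟨n, hn⟩
  have : f.coeff.support.min = (f.coeff.support.min' h : ℤ) := (Finset.coe_min' h).symm
  rw [mind, this, WithTop.untopD_coe]
  exact Finset.min'_le _ _ hn

lemma maxd_coeff {f : R2} (hf : f ≠ 0) : f (maxd f) ≠ 0 :=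
  Finsupp.mem_support_iff.1 (maxd_mem hf)
lemma mind_coeff {f : R2} (hf : f ≠ 0) : f (mind f) ≠ 0 :=
  Finsupp.mem_support_iff.1 (mind_mem hf)
lemma coeff_eq_zero_of_gt {f : R2} {n : ℤ} (h : maxd f < n) : f n = 0 := by
  by_contra hc
  exact absurd (le_maxd (Finsupp.mem_support_iff.2 hc)) (not_le.2 h)
lemma coeff_eq_zero_of_lt {f : R2} {n : ℤ} (h : n < mind f) : f n = 0 := by
  by_contra hc
  exact absurd (mind_le (Finsupp.mem_support_iff.2 hc)) (not_le.2 h)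

lemma maxd_eq {f : R2} {c : ℤ} (hc : f c ≠ 0) (hub : ∀ n, f n ≠ 0 → n ≤ c) : maxd f = c := by
  have hf : f ≠ 0 := fun h => hc (by simp [h])
  exact le_antisymm (hub _ (maxd_coeff hf)) (le_maxd (Finsupp.mem_support_iff.2 hc))
lemma mind_eq {f : R2} {c : ℤ} (hc : f c ≠ 0) (hlb : ∀ n, f n ≠ 0 → c ≤ n) : mind f = c := by
  have hf : f ≠ 0 := fun h => hc (by simp [h])
  exact le_antisymm (mind_le (Finsupp.mem_support_iff.2 hc)) (hlb _ (mind_coeff hf))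

lemma mind_le_maxd {f : R2} (hf : f ≠ 0) : mind f ≤ maxd f := mind_le (maxd_mem hf)
lemma lorder_nonneg {f : R2} (hf : f ≠ 0) : 0 ≤ lorder f := by
  rw [lorder_eq]; linarith [mind_le_maxd hf]

lemma sigma_apply (f : R2) (n : ℤ) : σ f n = f (-n) := by
  unfold σ; exact LaurentPolynomial.invert_apply f n
lemma sigma_sigma (f : R2) : σ (σ f) = f := by ext n; simp [sigma_apply]
lemma sigma_ne_zero {f : R2} (hf : f ≠ 0) : σ f ≠ 0 := by
  intro h; apply hf; have := congrArg σ h; rwa [sigma_sigma, map_zero] at this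
lemma maxd_sigma (f : R2) (hf : f ≠ 0) : maxd (σ f) = - mind f := by
  apply maxd_eq
  · rw [sigma_apply, neg_neg]; exact mind_coeff hf
  · intro n hn; rw [sigma_apply] at hn
    have := mind_le (Finsupp.mem_support_iff.2 hn); omega
lemma mind_sigma (f : R2) (hf : f ≠ 0) : mind (σ f) = - maxd f := by
  apply mind_eq
  · rw [sigma_apply, neg_neg]; exact maxd_coeff hf
  · intro n hn; rw [sigma_apply] at hn
    have := le_maxd (Finsupp.mem_support_iff.2 hn); omega
lemma maxd_neg (f : R2) : maxd (-f) = maxd f := by unfold maxd; rw [AddMonoidAlgebra.coeff_neg, Finsupp.support_neg]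
lemma mind_neg (f : R2) : mind (-f) = mind f := by unfold mind; rw [AddMonoidAlgebra.coeff_neg, Finsupp.support_neg]

lemma mul_apply_zero_of (f g : R2) (n : ℤ)
    (h : ∀ x ∈ f.coeff.support, ∀ y ∈ g.coeff.support, x + y ≠ n) : (f * g) n = 0 := by
  classical
  rw [AddMonoidAlgebra.coeff_mul]
  rw [Finsupp.sum]
  apply Finset.sum_eq_zero
  intro x hx
  rw [Finsupp.sum]
  apply Finset.sum_eq_zero
  intro y hy
  rw [if_neg (h x hx y hy)]

lemma mul_apply_unique (f g : R2) (n nf ng : ℤ) (hn : nf + ng = n)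
    (h : ∀ x ∈ f.coeff.support, ∀ y ∈ g.coeff.support, x + y = n → x = nf ∧ y = ng) :
    (f * g) n = f nf * g ng := by
  classical
  by_cases hf : nf ∈ f.coeff.support
  · by_cases hg : ng ∈ g.coeff.support
    · rw [AddMonoidAlgebra.coeff_mul, Finsupp.sum]
      rw [Finset.sum_eq_single_of_mem nf hf]
      · rw [Finsupp.sum, Finset.sum_eq_single_of_mem ng hg]
        · rw [if_pos hn]
        · intro y hy hne
          rw [if_neg]
          intro he
          exact hne (h nf hf y hy he).2
      · intro x hx hne
        rw [Finsupp.sum]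
        apply Finset.sum_eq_zero
        intro y hy
        rw [if_neg]
        intro he
        exact hne (h x hx y hy he).1
    · rw [Finsupp.notMem_support_iff.1 hg, mul_zero]
      apply mul_apply_zero_of
      intro x hx y hy he
      exact hg ((h x hx y hy he).2 ▸ hy)
  · rw [Finsupp.notMem_support_iff.1 hf, zero_mul]
    apply mul_apply_zero_of
    intro x hx y hy he
    exact hf ((h x hx y hy he).1 ▸ hx)

-- top/bottom coefficients of products
lemma mul_maxd_coeff {f g : R2} (hf : f ≠ 0) (hg : g ≠ 0) :
    (f * g) (maxd f + maxd g) = f (maxd f) * g (maxd g) := by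
  apply mul_apply_unique _ _ _ _ _ rfl
  intro x hx y hy he
  have h1 := le_maxd hx; have h2 := le_maxd hy
  omega
lemma mul_mind_coeff {f g : R2} (hf : f ≠ 0) (hg : g ≠ 0) :
    (f * g) (mind f + mind g) = f (mind f) * g (mind g) := by
  apply mul_apply_unique _ _ _ _ _ rfl
  intro x hx y hy he
  have h1 := mind_le hx; have h2 := mind_le hy
  omega
lemma mul_coeff_zero_of_gt {f g : R2} {n : ℤ} (h : maxd f + maxd g < n) : (f * g) n = 0 := by
  apply mul_apply_zero_of
  intro x hx y hy
  have h1 := le_maxd hx; have h2 := le_maxd hy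
  omega
lemma mul_coeff_zero_of_lt {f g : R2} {n : ℤ} (h : n < mind f + mind g) : (f * g) n = 0 := by
  apply mul_apply_zero_of
  intro x hx y hy
  have h1 := mind_le hx; have h2 := mind_le hy
  omega

lemma neg_one_coeff (n : ℤ) : ((-1 : R2)) n = if n = 0 then -1 else 0 := by
  have : ((1 : R2)) n = if n = 0 then 1 else 0 := by
    rw [AddMonoidAlgebra.one_def, AddMonoidAlgebra.coeff_single, Finsupp.single_apply]
    rcases eq_or_ne n 0 with h | h <;> simp [h, eq_comm]
  have hn : ((-1 : R2)) n = -((1:R2) n) := rfl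
  rw [hn, this]
  split_ifs <;> simp

section Det
variable {a b : R2} (hdet : a * σ b + b * σ a = -1)

include hdet in
lemma a_ne_zero : a ≠ 0 := by
  intro h
  rw [h, zero_mul, map_zero, mul_zero, add_zero] at hdet
  have := congrArg (fun f : R2 => f 0) hdet
  simp [neg_one_coeff] at this

include hdet in
lemma b_ne_zero : b ≠ 0 := by
  intro h
  rw [h, zero_mul, map_zero, mul_zero, zero_add] at hdet
  have := congrArg (fun f : R2 => f 0) hdet
  simp [neg_one_coeff] at this

include hdet in
lemma pcoeff (n : ℤ) : (a * σ b) n + (a * σ b) (-n) = if n = 0 then -1 else 0 := by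
  have hb : b * σ a = σ (a * σ b) := by
    rw [_root_.map_mul, sigma_sigma, mul_comm]
  have h2 : (a * σ b) n + (σ (a * σ b)) n = ((-1 : R2)) n := by
    rw [← Finsupp.add_apply, ← AddMonoidAlgebra.coeff_add, ← hb, hdet]
  rw [neg_one_coeff, sigma_apply] at h2
  exact h2
end Det

section Det2
variable {a b : R2} (hdet : a * σ b + b * σ a = -1)

include hdet in
lemma center_le : maxd a + mind a ≤ maxd b + mind b := by
  have ha := a_ne_zero hdet
  have hb := b_ne_zero hdet
  have hsb := sigma_ne_zero hb
  by_contra h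
  push_neg at h
  by_cases hd : maxd a - mind b = 0
  · have h1 := mind_le_maxd ha
    have h2 := mind_le_maxd hb
    omega
  · have htop : (a * σ b) (maxd a + maxd (σ b)) = a (maxd a) * b (mind b) := by
      rw [mul_maxd_coeff ha hsb, sigma_apply, maxd_sigma b hb, neg_neg]
    have hne : (a * σ b) (maxd a + maxd (σ b)) ≠ 0 :=
      htop ▸ mul_ne_zero (maxd_coeff ha) (mind_coeff hb)
    have hzero : (a * σ b) (-(maxd a + maxd (σ b))) = 0 := by
      apply mul_coeff_zero_of_lt
      rw [maxd_sigma b hb, mind_sigma b hb]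
      omega
    have hp := pcoeff hdet (maxd a + maxd (σ b))
    rw [hzero, add_zero, if_neg (by rw [maxd_sigma b hb]; omega)] at hp
    exact hne hp

include hdet in
lemma center_eq : maxd a + mind a = maxd b + mind b := by
  have hdet' : b * σ a + a * σ b = -1 := by rw [add_comm]; exact hdet
  exact le_antisymm (center_le hdet) (center_le hdet')

include hdet in
lemma corner_eq (hd : mind b < mind a) :
    a (maxd a) * b (mind b) = -(a (mind a) * b (maxd b)) := by
  have ha := a_ne_zero hdet
  have hb := b_ne_zero hdet
  have hsb := sigma_ne_zero hb
  have hc := center_eq hdet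
  have hma := mind_le_maxd ha
  have htop : (a * σ b) (maxd a + maxd (σ b)) = a (maxd a) * b (mind b) := by
    rw [mul_maxd_coeff ha hsb, sigma_apply, maxd_sigma b hb, neg_neg]
  have hbot : (a * σ b) (mind a + mind (σ b)) = a (mind a) * b (maxd b) := by
    rw [mul_mind_coeff ha hsb, sigma_apply, mind_sigma b hb, neg_neg]
  have hneg : -(maxd a + maxd (σ b)) = mind a + mind (σ b) := by
    rw [maxd_sigma b hb, mind_sigma b hb]; omega
  have hp := pcoeff hdet (maxd a + maxd (σ b))
  rw [hneg, htop, hbot, if_neg (by rw [maxd_sigma b hb]; omega)] at hp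
  linarith
end Det2

lemma step {a b : R2} (hdet : a * σ b + b * σ a = -1) (horder : lorder a < lorder b) :
    ∃ S b', σ S = -S ∧ b = b' + S * a ∧ a * σ b' + b' * σ a = -1 ∧
      b' ≠ 0 ∧ maxd b' < maxd b ∧ mind b < mind b' := by
  classical
  have ha := a_ne_zero hdet
  have hb := b_ne_zero hdet
  have hc := center_eq hdet
  rw [lorder_eq, lorder_eq] at horder
  set e : ℤ := maxd b - maxd a with he_def
  have he : 0 < e := by omega
  have heb : e = mind a - mind b := by omega
  have hd : mind b < mind a := by omega
  have hA : a (maxd a) ≠ 0 := maxd_coeff ha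
  set s : ℝ := b (maxd b) / a (maxd a) with hs_def
  set S : R2 := AddMonoidAlgebra.single e s - AddMonoidAlgebra.single (-e) s with hS_def
  have hσS : σ S = -S := by
    ext n
    have h1 : σ S n = S (-n) := sigma_apply S n
    rw [h1, hS_def]
    simp only [AddMonoidAlgebra.coeff_neg, Finsupp.neg_apply, AddMonoidAlgebra.coeff_sub, Finsupp.sub_apply,
      AddMonoidAlgebra.coeff_single, Finsupp.single_apply]
    split_ifs <;> first | ring1 | (exfalso; omega)
  set b' : R2 := b - S * a with hb'_def
  have cb : ∀ m : ℤ, b' m = b m - s * a (m - e) + s * a (m + e) := by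
    intro m
    have h1 : (S * a) m = s * a (-e + m) - s * a (e + m) := by
      rw [hS_def, sub_mul, AddMonoidAlgebra.coeff_sub, Finsupp.sub_apply,
        AddMonoidAlgebra.coeff_single_mul_apply,
        AddMonoidAlgebra.coeff_single_mul_apply, neg_neg]
    have h2 : b' m = b m - (S * a) m := rfl
    rw [h2, h1, (by ring : -e + m = m - e), (by ring : e + m = m + e)]
    ring
  have htopz : ∀ m : ℤ, maxd b ≤ m → b' m = 0 := by
    intro m hm
    rw [cb]
    rcases eq_or_lt_of_le hm with hmeq | hmlt
    · have h1 : maxd b - e = maxd a := by omega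
      have h2 : a (maxd b + e) = 0 := coeff_eq_zero_of_gt (by omega)
      rw [← hmeq, h1, h2, mul_zero, add_zero, hs_def, div_mul_cancel₀ _ hA, sub_self]
    · have h1 : b m = 0 := coeff_eq_zero_of_gt hmlt
      have h2 : a (m - e) = 0 := coeff_eq_zero_of_gt (by omega)
      have h3 : a (m + e) = 0 := coeff_eq_zero_of_gt (by omega)
      rw [h1, h2, h3]; ring
  have hbotz : ∀ m : ℤ, m ≤ mind b → b' m = 0 := by
    intro m hm
    rw [cb]
    have h2 : a (m - e) = 0 := coeff_eq_zero_of_lt (by omega)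
    rcases eq_or_lt_of_le hm with hmeq | hmlt
    · have h1 : mind b + e = mind a := by omega
      have h2' : a (mind b - e) = 0 := coeff_eq_zero_of_lt (by omega)
      have hcor := corner_eq hdet hd
      rw [hmeq, h1, h2', mul_zero, sub_zero, hs_def]
      field_simp
      linarith [hcor]
    · have h1 : b m = 0 := coeff_eq_zero_of_lt hmlt
      have h3 : a (m + e) = 0 := coeff_eq_zero_of_lt (by omega)
      rw [h1, h2, h3]; ring
  have hdet' : a * σ b' + b' * σ a = -1 := by
    have hsb' : σ b' = σ b + S * σ a := by
      rw [hb'_def, map_sub, _root_.map_mul, hσS]; ring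
    calc a * σ b' + b' * σ a = a * σ b + b * σ a + (a * (S * σ a) - S * a * σ a) := by
          rw [hsb', hb'_def]; ring
      _ = -1 := by rw [hdet]; ring
  have hb' : b' ≠ 0 := b_ne_zero hdet'
  refine ⟨S, b', hσS, by rw [hb'_def]; ring, hdet', hb', ?_, ?_⟩
  · by_contra h
    push_neg at h
    exact maxd_coeff hb' (htopz _ h)
  · by_contra h
    push_neg at h
    exact mind_coeff hb' (hbotz _ h)

/-! ### sub2 / scal machinery -/

lemma sub2_apply_even (f : R2) (n : ℤ) : sub2 f (2 * n) = f n := by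
  have h : Function.Injective (fun n : ℤ => 2 * n) := fun x y h => by dsimp at h; omega
  show (Finsupp.mapDomain (fun n : ℤ => 2 * n) f.coeff) ((fun n : ℤ => 2*n) n) = f.coeff n
  exact Finsupp.mapDomain_apply h f.coeff n

lemma sub2_apply_odd (f : R2) (n : ℤ) : sub2 f (2 * n + 1) = 0 := by
  show (Finsupp.mapDomain (fun n : ℤ => 2 * n) f.coeff) (2*n+1) = 0
  apply Finsupp.mapDomain_notin_range
  rintro ⟨m, hm⟩
  dsimp at hm; omega

lemma T_mul_apply (g : R2) (m : ℤ) : ((T 1 : R2) * g) m = g (m - 1) := by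
  have hT : (T 1 : R2) = AddMonoidAlgebra.single 1 1 := rfl
  rw [hT, AddMonoidAlgebra.coeff_single_mul_apply, one_mul, (by ring : -1 + m = m - 1)]

lemma scal_even (H : M2) (i : Fin 2) (n : ℤ) : scal H i (2 * n) = H i 0 n := by
  unfold scal
  rw [AddMonoidAlgebra.coeff_add, Finsupp.add_apply, sub2_apply_even, T_mul_apply,
    (by ring : 2 * n - 1 = 2 * (n - 1) + 1), sub2_apply_odd, add_zero]

lemma scal_odd (H : M2) (i : Fin 2) (n : ℤ) : scal H i (2 * n + 1) = H i 1 n := by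
  unfold scal
  rw [AddMonoidAlgebra.coeff_add, Finsupp.add_apply, sub2_apply_odd, T_mul_apply, add_sub_cancel_right,
    sub2_apply_even, zero_add]

lemma maxd_scal (H : M2) (i : Fin 2) (h0 : H i 0 ≠ 0) (h1 : H i 1 ≠ 0) :
    maxd (scal H i) = max (2 * maxd (H i 0)) (2 * maxd (H i 1) + 1) := by
  apply maxd_eq
  · rcases le_or_gt (2 * maxd (H i 0)) (2 * maxd (H i 1) + 1) with h | h
    · rw [max_eq_right h, scal_odd]; exact maxd_coeff h1
    · rw [max_eq_left h.le, scal_even]; exact maxd_coeff h0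
  · intro m hm
    rcases Int.even_or_odd m with ⟨k, hk⟩ | ⟨k, hk⟩
    · rw [(by omega : m = 2 * k), scal_even] at hm
      have := le_maxd (Finsupp.mem_support_iff.2 hm); omega
    · rw [(by omega : m = 2 * k + 1), scal_odd] at hm
      have := le_maxd (Finsupp.mem_support_iff.2 hm); omega

lemma mind_scal (H : M2) (i : Fin 2) (h0 : H i 0 ≠ 0) (h1 : H i 1 ≠ 0) :
    mind (scal H i) = min (2 * mind (H i 0)) (2 * mind (H i 1) + 1) := by
  apply mind_eq
  · rcases le_or_gt (2 * mind (H i 0)) (2 * mind (H i 1) + 1) with h | h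
    · rw [min_eq_left h, scal_even]; exact mind_coeff h0
    · rw [min_eq_right h.le, scal_odd]; exact mind_coeff h1
  · intro m hm
    rcases Int.even_or_odd m with ⟨k, hk⟩ | ⟨k, hk⟩
    · rw [(by omega : m = 2 * k), scal_even] at hm
      have := mind_le (Finsupp.mem_support_iff.2 hm); omega
    · rw [(by omega : m = 2 * k + 1), scal_odd] at hm
      have := mind_le (Finsupp.mem_support_iff.2 hm); omega

/-! ### the canonical HS matrix -/

def Hmat (a b : R2) : M2 := !![a, σ a; b, -σ b]

lemma Hmat00 (a b : R2) : Hmat a b 0 0 = a := rfl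
lemma Hmat01 (a b : R2) : Hmat a b 0 1 = σ a := rfl
lemma Hmat10 (a b : R2) : Hmat a b 1 0 = b := rfl
lemma Hmat11 (a b : R2) : Hmat a b 1 1 = -σ b := rfl

lemma lorder_scal_Hmat {a b : R2} (ha : a ≠ 0) (hb : b ≠ 0)
    (h1 : maxd a = maxd b) (h2 : mind a = mind b) :
    lorder (scal (Hmat a b) 0) = lorder (scal (Hmat a b) 1) := by
  have hsa : σ a ≠ 0 := sigma_ne_zero ha
  have hsb : (-σ b : R2) ≠ 0 := neg_ne_zero.2 (sigma_ne_zero hb)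
  rw [lorder_eq, lorder_eq,
    maxd_scal _ _ (by rw [Hmat00]; exact ha) (by rw [Hmat01]; exact hsa),
    mind_scal _ _ (by rw [Hmat00]; exact ha) (by rw [Hmat01]; exact hsa),
    maxd_scal _ _ (by rw [Hmat10]; exact hb) (by rw [Hmat11]; exact hsb),
    mind_scal _ _ (by rw [Hmat10]; exact hb) (by rw [Hmat11]; exact hsb),
    Hmat00, Hmat01, Hmat10, Hmat11, maxd_neg, mind_neg,
    maxd_sigma a ha, mind_sigma a ha, maxd_sigma b hb, mind_sigma b hb, h1, h2]

/-! ### matrix computation helpers -/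

lemma Lm_eq : Lm = !![(1 : R2), 0; 0, -1] := by
  ext i j; fin_cases i <;> fin_cases j <;> simp [Lm, Matrix.diagonal]

lemma LmLm : Lm * Lm = 1 := by
  rw [Lm_eq, Matrix.mul_fin_two, Matrix.one_fin_two]
  norm_num

lemma mσ_mul (X Y : M2) : mσ (X * Y) = mσ X * mσ Y := by
  ext i j
  simp [mσ, Matrix.mul_apply, Matrix.map_apply, map_sum, _root_.map_mul]

lemma mσ_one : mσ (1 : M2) = 1 := by
  ext i j
  fin_cases i <;> fin_cases j <;> simp [mσ, Matrix.map_apply, Matrix.one_apply]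

lemma hmat_base {a b : R2} (hdet : a * σ b + b * σ a = -1) :
    (Hmat a b).det = 1 ∧ mσ (Hmat a b) = Lm * Hmat a b * Jm := by
  constructor
  · rw [Hmat, Matrix.det_fin_two_of]
    linear_combination -hdet
  · rw [Hmat, Jm, Lm_eq, Matrix.mul_fin_two, Matrix.mul_fin_two]
    ext i j
    fin_cases i <;> fin_cases j <;>
      simp [mσ, Matrix.map_apply, sigma_sigma] <;> ring

/-! ### prodRev lemmas -/

lemma prodRev_zero (SS : Fin 0 → M2) : prodRev SS = 1 := by
  unfold prodRev
  rw [List.ofFn_zero, List.reverse_nil, List.prod_nil]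

lemma prodRev_snoc {N : ℕ} (SS : Fin N → M2) (A : M2) :
    prodRev (Fin.snoc SS A) = A * prodRev SS := by
  unfold prodRev
  have h : List.ofFn (Fin.snoc SS A : Fin (N + 1) → M2) = (List.ofFn SS).concat A := by
    rw [List.ofFn_succ']
    simp [Fin.snoc_castSucc, Fin.snoc_last]
  rw [h, List.concat_eq_append, List.reverse_concat', List.prod_cons]

/-! ### conjugation facts for lifting matrices -/

lemma conj_umat {S : R2} (hS : σ S = -S) : mσ (umat S) = Lm * umat S * Lm := by
  rw [umat, Lm_eq, Matrix.mul_fin_two, Matrix.mul_fin_two]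
  ext i j
  fin_cases i <;> fin_cases j <;> simp [mσ, Matrix.map_apply, hS] <;> ring

lemma conj_lmat {S : R2} (hS : σ S = -S) : mσ (lmat S) = Lm * lmat S * Lm := by
  rw [lmat, Lm_eq, Matrix.mul_fin_two, Matrix.mul_fin_two]
  ext i j
  fin_cases i <;> fin_cases j <;> simp [mσ, Matrix.map_apply, hS] <;> ring

lemma conj_list : ∀ l : List M2, (∀ A ∈ l, mσ A = Lm * A * Lm) →
    mσ l.prod = Lm * l.prod * Lm
  | [], _ => by rw [List.prod_nil, mσ_one, mul_one, LmLm]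
  | (A :: l), h => by
      rw [List.prod_cons, mσ_mul, conj_list l (fun B hB => h B (List.mem_cons_of_mem _ hB)),
        h A (List.mem_cons_self)]
      have h2 : (Lm * A * Lm) * (Lm * l.prod * Lm) = Lm * (A * ((Lm * Lm) * (l.prod * Lm))) := by
        simp only [mul_assoc]
      rw [h2, LmLm, one_mul]
      simp only [mul_assoc]

/-! ### the matrix lifting steps -/

lemma matrix_step_lower {a b S b' : R2} (hb : b = b' + S * a) (hS : σ S = -S) :
    Hmat a b = lmat S * Hmat a b' := by
  have hsb : σ b = σ b' - S * σ a := by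
    rw [hb, map_add, _root_.map_mul, hS]; ring
  have e1 : (1 : R2) * a + 0 * b' = a := by ring
  have e2 : (1 : R2) * σ a + 0 * (-σ b') = σ a := by ring
  have e3 : S * a + 1 * b' = b := by rw [hb]; ring
  have e4 : S * σ a + 1 * (-σ b') = -σ b := by rw [hsb]; ring
  rw [Hmat, Hmat, lmat, Matrix.mul_fin_two, e1, e2, e3, e4]

lemma matrix_step_upper {a b S a' : R2} (ha : a = a' + S * b) (hS : σ S = -S) :
    Hmat a b = umat S * Hmat a' b := by
  have hsa : σ a = σ a' - S * σ b := by
    rw [ha, map_add, _root_.map_mul, hS]; ring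
  have e1 : (1 : R2) * a' + S * b = a := by rw [ha]; ring
  have e2 : (1 : R2) * σ a' + S * (-σ b) = σ a := by rw [hsa]; ring
  have e3 : (0 : R2) * a' + 1 * b = b := by ring
  have e4 : (0 : R2) * σ a' + 1 * (-σ b) = -σ b := by ring
  rw [Hmat, Hmat, umat, Matrix.mul_fin_two, e1, e2, e3, e4]

/-! ### main induction -/

lemma base_result {a b : R2} (hdet : a * σ b + b * σ a = -1) (heq : lorder a = lorder b) :
    ∃ (N : ℕ) (SS : Fin N → M2) (B : M2),
      (∀ i, ∃ S : R2, (SS i = umat S ∨ SS i = lmat S) ∧ σ S = -S) ∧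
      (B.det = 1 ∧ mσ B = Lm * B * Jm ∧ lorder (scal B 0) = lorder (scal B 1)) ∧
      Hmat a b = prodRev SS * B := by
  have ha := a_ne_zero hdet
  have hb := b_ne_zero hdet
  have hc := center_eq hdet
  rw [lorder_eq, lorder_eq] at heq
  have h1 : maxd a = maxd b := by omega
  have h2 : mind a = mind b := by omega
  obtain ⟨hd, hm⟩ := hmat_base hdet
  exact ⟨0, Fin.elim0, Hmat a b, fun i => i.elim0, ⟨hd, hm, lorder_scal_Hmat ha hb h1 h2⟩,
    by rw [prodRev_zero, one_mul]⟩

lemma main_aux : ∀ (n : ℕ) (a b : R2), a * σ b + b * σ a = -1 →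
    (lorder a + lorder b).toNat ≤ n →
    ∃ (N : ℕ) (SS : Fin N → M2) (B : M2),
      (∀ i, ∃ S : R2, (SS i = umat S ∨ SS i = lmat S) ∧ σ S = -S) ∧
      (B.det = 1 ∧ mσ B = Lm * B * Jm ∧ lorder (scal B 0) = lorder (scal B 1)) ∧
      Hmat a b = prodRev SS * B := by
  intro n
  induction n with
  | zero =>
    intro a b hdet hle
    have h1 := lorder_nonneg (a_ne_zero hdet)
    have h2 := lorder_nonneg (b_ne_zero hdet)
    exact base_result hdet (by omega)
  | succ n ih =>
    intro a b hdet hle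
    rcases lt_trichotomy (lorder a) (lorder b) with h | h | h
    · obtain ⟨S, b', hσS, hb, hdet', hb'ne, hmax, hmin⟩ := step hdet h
      have hm : (lorder a + lorder b').toNat ≤ n := by
        have e1 := lorder_eq b'
        have e2 := lorder_eq b
        have e3 := lorder_nonneg (a_ne_zero hdet)
        have e4 := lorder_nonneg hb'ne
        omega
      obtain ⟨N, SS, B, hSS, hB, hfac⟩ := ih a b' hdet' hm
      refine ⟨N + 1, Fin.snoc SS (lmat S), B, ?_, hB, ?_⟩
      · intro i
        refine Fin.lastCases ?_ ?_ i
        · rw [Fin.snoc_last]; exact ⟨S, Or.inr rfl, hσS⟩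
        · intro j; rw [Fin.snoc_castSucc]; exact hSS j
      · rw [prodRev_snoc, mul_assoc, ← hfac]
        exact matrix_step_lower hb hσS
    · exact base_result hdet h
    · have hdet2 : b * σ a + a * σ b = -1 := by rw [add_comm]; exact hdet
      obtain ⟨S, a', hσS, ha, hdet', ha'ne, hmax, hmin⟩ := step hdet2 h
      have hdet'' : a' * σ b + b * σ a' = -1 := by rw [add_comm]; exact hdet'
      have hm : (lorder a' + lorder b).toNat ≤ n := by
        have e1 := lorder_eq a'
        have e2 := lorder_eq a
        have e3 := lorder_nonneg (b_ne_zero hdet)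
        have e4 := lorder_nonneg ha'ne
        omega
      obtain ⟨N, SS, B, hSS, hB, hfac⟩ := ih a' b hdet'' hm
      refine ⟨N + 1, Fin.snoc SS (umat S), B, ?_, hB, ?_⟩
      · intro i
        refine Fin.lastCases ?_ ?_ i
        · rw [Fin.snoc_last]; exact ⟨S, Or.inl rfl, hσS⟩
        · intro j; rw [Fin.snoc_castSucc]; exact hSS j
      · rw [prodRev_snoc, mul_assoc, ← hfac]
        exact matrix_step_upper ha hσS

lemma entries_of_sym {H : M2} (hσH : mσ H = Lm * H * Jm) :
    H 0 1 = σ (H 0 0) ∧ H 1 1 = -σ (H 1 0) := by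
  have h00 := congrFun (congrFun hσH 0) 0
  have h10 := congrFun (congrFun hσH 1) 0
  simp [mσ, Matrix.map_apply, Lm, Jm, Matrix.mul_apply, Fin.sum_univ_two,
    Matrix.diagonal] at h00 h10
  constructor
  · rw [← h00]
  · rw [show σ (H 1 0) = -(H 1 1) from h10]; ring

/-- cf. Brislawn–Wohlberg, Theorem 14.  A unimodular filter bank
satisfies the concentric delay-minimized HS condition iff it factors as
`S_{N-1} ⋯ S₀ · B` with whole-sample antisymmetric lifting filters and a
concentric equal-length HS base filter bank `B ∈ 𝔅_H`. -/
theorem stmt6 (H : M2) (hdet : H.det = 1) :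
    mσ H = Lm * H * Jm ↔
      ∃ (N : ℕ) (SS : Fin N → M2) (B : M2),
        (∀ i, ∃ S : R2, (SS i = umat S ∨ SS i = lmat S) ∧ σ S = -S) ∧
        (B.det = 1 ∧ mσ B = Lm * B * Jm ∧ lorder (scal B 0) = lorder (scal B 1)) ∧
        H = prodRev SS * B := by
  constructor
  · intro hσH
    obtain ⟨h01, h11⟩ := entries_of_sym hσH
    have hH : H = Hmat (H 0 0) (H 1 0) := by
      have e := Matrix.eta_fin_two H
      rw [h01, h11] at e
      exact e
    rw [Matrix.det_fin_two, h01, h11] at hdet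
    have hdet2 : H 0 0 * σ (H 1 0) + H 1 0 * σ (H 0 0) = -1 := by
      linear_combination -hdet
    obtain ⟨N, SS, B, hSS, hB, hfac⟩ :=
      main_aux (lorder (H 0 0) + lorder (H 1 0)).toNat (H 0 0) (H 1 0) hdet2 le_rfl
    exact ⟨N, SS, B, hSS, hB, by rw [hH, hfac]⟩
  · rintro ⟨N, SS, B, hSS, ⟨-, hBσ, -⟩, rfl⟩
    have hP : mσ (prodRev SS) = Lm * prodRev SS * Lm := by
      show mσ ((List.ofFn SS).reverse.prod) = Lm * (List.ofFn SS).reverse.prod * Lm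
      apply conj_list
      intro A hA
      rw [List.mem_reverse, List.mem_ofFn] at hA
      obtain ⟨i, rfl⟩ := hA
      obtain ⟨S, hS, hσS⟩ := hSS i
      rcases hS with h | h
      · rw [h]; exact conj_umat hσS
      · rw [h]; exact conj_lmat hσS
    rw [mσ_mul, hP, hBσ]
    have h2 : (Lm * prodRev SS * Lm) * (Lm * B * Jm)
        = Lm * (prodRev SS * ((Lm * Lm) * (B * Jm))) := by
      simp only [mul_assoc]
    rw [h2, LmLm, one_mul]
    simp only [mul_assoc]
end
end

section
/- Let 𝔖 = (𝒟, 𝒰, ℒ, 𝔅) be a 𝒟-invariant, order-increasing group lifting structure, and suppose H ∈ SL(2,R) has two irreducible group lifting factorizations H = D_K·S_{N−1}⋯S₀·B = D_{K'}·S'_{N'−1}⋯S'₀·B' in 𝔖. Then N' = N, B' = D_α·B where α := K/K', and S'_i = γ_α(S_i) for 0 ≤ i < N. If, in addition, there exist indices i, j ∈ {0,1} and a real z₀ ≠ 0 such that B'_{ij}(z₀) = B_{ij}(z₀) ≠ 0 (evaluating Laurent polynomials at z₀), then the two factorizations are identical: K' = K, B' = B, and S'_i = S_i for all i. -/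
open LaurentPolynomial Matrix

noncomputable section

/-- A group lifting structure: additive groups `P₀`, `P₁` of lifting filters
(giving the lifting matrix groups `𝒰 = υ(P₀)` and `ℒ = λ(P₁)`), the full
gain-scaling group `𝒟`, and a set `𝔅 ⊆ SL(2,R)` of base filter banks. -/
structure GLS where
  P0 : AddSubgroup R2
  P1 : AddSubgroup R2
  Bset : Set M2
  hB : ∀ B ∈ Bset, Matrix.det B = 1

/-- The upper-triangular lifting matrix group `𝒰 = υ(P₀)`. -/
def GLS.Uset (G : GLS) : Set M2 := umat '' (G.P0 : Set R2)

/-- The lower-triangular lifting matrix group `ℒ = λ(P₁)`. -/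
def GLS.Lset (G : GLS) : Set M2 := lmat '' (G.P1 : Set R2)

/-- `𝒟`-invariance: every `γ_K` (`K ≠ 0`) fixes `𝒰` and `ℒ`. -/
def GLS.DInv (G : GLS) : Prop :=
  ∀ K : ℝ, K ≠ 0 → γm K '' G.Uset = G.Uset ∧ γm K '' G.Lset = G.Lset

/-- An irreducible cascade over `𝒰 ∪ ℒ`. -/
def GLS.IrrCas (G : GLS) {N : ℕ} (SS : Fin N → M2) : Prop :=
  (∀ i, SS i ∈ G.Uset ∪ G.Lset ∧ SS i ≠ 1) ∧ Alternating SS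

/-- The strictly polyphase order-increasing property: along every irreducible
cascade applied to every base filter bank, the polyphase order of the partial
products strictly increases. -/
def GLS.OrderInc (G : GLS) : Prop :=
  ∀ B ∈ G.Bset, ∀ (N : ℕ) (SS : Fin N → M2), G.IrrCas SS →
    ∀ n < N, morder (partialE SS B (n + 1)) > morder (partialE SS B n)

/-! Lifting matrices with filters in `P₀`, resp. `P₁`, form subgroups `𝒰`, `ℒ` of `SL(2,R)` meeting
only in the identity, and an irreducible cascade is a reduced word over `𝒰 ∪ ℒ`. Moving the gains
`D_K` to the right (`D_K A = γ_K(A) D_K`, and `γ_K` preserves `𝒰` and `ℒ`) turns two factorizations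
of `H` into `l · D_K B = m · D_{K'} B'` with reduced words `l`, `m`. If `l ≠ m`, free reduction of
`m⁻¹ l` gives a nonempty reduced word `w` with `w · D_K B = D_{K'} B'`; order increase along `w`
and along `w⁻¹` (it holds for the rescaled bases `D_K B` as well, since `D_K` preserves
polyphase order) gives `order(D_{K'} B') > order(D_K B) > order(D_{K'} B')`. So the two cascades
agree after conjugation, and `D_K B = D_{K'} B'`; a common nonzero value of one entry of `B` and
`B'` then forces `K / K' = 1`. -/

section ReducedWord

variable {Γ : Type*} [Group Γ] (U L : Subgroup Γ)

/-- For a letter `x` of a word over two disjoint subgroups, `x ∉ U` means `x ∈ L`, so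
alternation is recorded by the sequence of truth values of `x ∈ U`. -/
def IsReducedWord (w : List Γ) : Prop :=
  (∀ x ∈ w, x ≠ 1 ∧ (x ∈ U ∨ x ∈ L)) ∧ (w.map (· ∈ U)).IsChain (· ≠ ·)

variable {U L}

theorem IsReducedWord.tail {x : Γ} {w : List Γ} (hw : IsReducedWord U L (x :: w)) :
    IsReducedWord U L w :=
  ⟨fun y hy => hw.1 y (List.mem_cons_of_mem x hy), hw.2.tail⟩

theorem IsReducedWord.reverse {w : List Γ} (hw : IsReducedWord U L w) :
    IsReducedWord U L w.reverse := by
  refine ⟨fun x hx => hw.1 x (List.mem_reverse.mp hx), ?_⟩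
  rw [List.map_reverse, List.isChain_reverse]
  exact hw.2.imp fun _ _ h => Ne.symm h

theorem IsReducedWord.map_inv {w : List Γ} (hw : IsReducedWord U L w) :
    IsReducedWord U L (w.map (·⁻¹)) := by
  refine ⟨?_, ?_⟩
  · simp only [List.mem_map]
    rintro _ ⟨x, hx, rfl⟩
    obtain ⟨hx1, hxUL⟩ := hw.1 x hx
    exact ⟨inv_ne_one.mpr hx1, hxUL.imp inv_mem inv_mem⟩
  · simpa only [List.map_map, Function.comp_def, inv_mem_iff] using hw.2

theorem inv_mul_mem_of_mem_iff (hUL : Disjoint U L) {a b : Γ} (ha : a ∈ U ∨ a ∈ L)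
    (hb : b ∈ U ∨ b ∈ L) (hab : a ∈ U ↔ b ∈ U) (hne : b⁻¹ * a ≠ 1) :
    (b⁻¹ * a ∈ U ∨ b⁻¹ * a ∈ L) ∧ (b⁻¹ * a ∈ U ↔ a ∈ U) := by
  by_cases haU : a ∈ U
  · have hcU : b⁻¹ * a ∈ U := mul_mem (inv_mem (hab.mp haU)) haU
    exact ⟨.inl hcU, iff_of_true hcU haU⟩
  · have hcL : b⁻¹ * a ∈ L :=
      mul_mem (inv_mem (hb.resolve_left (hab.not.mp haU))) (ha.resolve_left haU)
    exact ⟨.inr hcL, iff_of_false (fun hcU => hne (Subgroup.disjoint_def.mp hUL hcU hcL)) haU⟩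

theorem IsReducedWord.inv_reverse_append {a b : Γ} {l m : List Γ}
    (hl : IsReducedWord U L (a :: l)) (hm : IsReducedWord U L (b :: m))
    (hab : ¬(a ∈ U ↔ b ∈ U)) :
    IsReducedWord U L ((m.map (·⁻¹)).reverse ++ b⁻¹ :: a :: l) := by
  have hm' := hm.map_inv.reverse
  rw [List.map_cons, List.reverse_cons] at hm'
  refine ⟨fun x hx => ?_, ?_⟩
  · rw [← List.singleton_append, ← List.append_assoc] at hx
    exact (List.mem_append.mp hx).elim (hm'.1 x) (hl.1 x)
  · have h1 := hm'.2
    rw [List.map_append, List.map_singleton, inv_mem_iff] at h1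
    rw [List.map_append, List.map_cons, List.map_cons, List.isChain_append_cons_cons, inv_mem_iff]
    exact ⟨h1, fun h => hab (Iff.of_eq h.symm), hl.2⟩

theorem IsReducedWord.inv_reverse_append_inv_mul (hUL : Disjoint U L) {a b : Γ} {l m : List Γ}
    (hl : IsReducedWord U L (a :: l)) (hm : IsReducedWord U L (b :: m)) (hab : a ∈ U ↔ b ∈ U)
    (hne : a ≠ b) : IsReducedWord U L ((m.map (·⁻¹)).reverse ++ b⁻¹ * a :: l) := by
  have hc : b⁻¹ * a ≠ 1 := fun h => hne (inv_mul_eq_one.mp h).symm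
  obtain ⟨hcUL, hcU⟩ :=
    inv_mul_mem_of_mem_iff hUL (hl.1 a (by simp)).2 (hm.1 b (by simp)).2 hab hc
  have hm' := hm.map_inv.reverse
  rw [List.map_cons, List.reverse_cons] at hm'
  refine ⟨fun x hx => ?_, ?_⟩
  · rcases List.mem_append.mp hx with hx | hx
    · exact hm'.1 x (List.mem_append_left _ hx)
    · rcases List.mem_cons.mp hx with rfl | hx
      · exact ⟨hc, hcUL⟩
      · exact hl.1 x (List.mem_cons_of_mem a hx)
  · have h1 := hm'.2
    have h2 := hl.2
    rw [List.map_append, List.map_singleton,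
      show (b⁻¹ ∈ U) = (b⁻¹ * a ∈ U) by rw [inv_mem_iff, hcU, hab]] at h1
    rw [List.map_cons, show (a ∈ U) = (b⁻¹ * a ∈ U) by rw [hcU], ← List.singleton_append] at h2
    rw [List.map_append, List.map_cons, ← List.singleton_append, ← List.append_assoc]
    exact h1.append_overlap h2 (List.cons_ne_nil _ _)

/-- Free reduction: after the common prefix of `l` and `m`, the first letters `a ≠ b` either lie
on different sides, and `m⁻¹ l` is already reduced, or on the same side, and they merge into the
single letter `b⁻¹ a ≠ 1`. -/
theorem IsReducedWord.exists_prod_eq_inv_mul (hUL : Disjoint U L) :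
    ∀ {l m : List Γ}, IsReducedWord U L l → IsReducedWord U L m → l ≠ m →
      ∃ w ≠ [], IsReducedWord U L w ∧ w.prod = m.prod⁻¹ * l.prod
  | [], [], _, _, hne => absurd rfl hne
  | [], b :: m, _, hm, _ =>
    ⟨((b :: m).map (·⁻¹)).reverse, by simp, hm.map_inv.reverse, by simp [List.prod_inv_reverse]⟩
  | a :: l, [], hl, _, _ => ⟨a :: l, List.cons_ne_nil a l, hl, by simp⟩
  | a :: l, b :: m, hl, hm, hne => by
    by_cases hab : a = b
    · subst hab
      obtain ⟨w, hw0, hw, hprod⟩ :=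
        exists_prod_eq_inv_mul hUL hl.tail hm.tail (by simpa using hne)
      exact ⟨w, hw0, hw, by simp [hprod, mul_assoc]⟩
    by_cases hside : a ∈ U ↔ b ∈ U
    · exact ⟨_, by simp, hl.inv_reverse_append_inv_mul hUL hm hside hab,
        by simp [List.prod_inv_reverse, mul_assoc]⟩
    · exact ⟨_, by simp, hl.inv_reverse_append hm hside,
        by simp [List.prod_inv_reverse, mul_assoc]⟩

end ReducedWord

theorem umat_mul (a b : R2) : umat a * umat b = umat (a + b) := by
  simp [umat, add_comm]

theorem lmat_mul (a b : R2) : lmat a * lmat b = lmat (a + b) := by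
  simp [lmat]

theorem umat_zero : umat 0 = 1 := by
  simp [umat, Matrix.one_fin_two]

theorem lmat_zero : lmat 0 = 1 := by
  simp [lmat, Matrix.one_fin_two]

theorem det_umat (a : R2) : (umat a).det = 1 := by
  simp [umat, Matrix.det_fin_two_of]

theorem det_lmat (a : R2) : (lmat a).det = 1 := by
  simp [lmat, Matrix.det_fin_two_of]

theorem adjugate_umat (a : R2) : (umat a).adjugate = umat (-a) := by
  simp [umat, Matrix.adjugate_fin_two_of]

theorem adjugate_lmat (a : R2) : (lmat a).adjugate = lmat (-a) := by
  simp [lmat, Matrix.adjugate_fin_two_of]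

theorem eq_zero_of_umat_eq_lmat {a b : R2} (h : umat a = lmat b) : a = 0 ∧ b = 0 :=
  ⟨by simpa [umat, lmat] using congrFun (congrFun h 0) 1,
    by simpa [umat, lmat] using (congrFun (congrFun h 1) 0).symm⟩

theorem SL2.coe_inv_mul_cancel_left (g : SL2) (X : M2) : ((g⁻¹ : SL2) : M2) * (g * X) = X := by
  rw [← mul_assoc, ← Matrix.SpecialLinearGroup.coe_mul, inv_mul_cancel,
    Matrix.SpecialLinearGroup.coe_one, one_mul]

theorem SL2.coe_list_prod (w : List SL2) :
    ((w.prod : SL2) : M2) = (w.map fun x : SL2 => (x : M2)).prod :=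
  map_list_prod Matrix.SpecialLinearGroup.coeMonoidHom w

theorem SL2.coe_ne_coe_iff {x y : SL2} : (x : M2) ≠ y ↔ x ≠ y :=
  Subtype.coe_injective.ne_iff


theorem DKm_mul (a b : ℝ) : DKm a * DKm b = DKm (a * b) := by
  rw [DKm, DKm, Matrix.diagonal_mul_diagonal]
  congr 1
  funext i
  fin_cases i <;> simp [← _root_.map_mul, mul_comm]

theorem DKm_one : DKm 1 = 1 := by
  rw [DKm, ← Matrix.diagonal_one]
  congr 1
  funext i
  fin_cases i <;> simp

theorem DKm_inv {c : ℝ} (hc : c ≠ 0) : (DKm c)⁻¹ = DKm c⁻¹ :=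
  Matrix.inv_eq_right_inv (by rw [DKm_mul, mul_inv_cancel₀ hc, DKm_one])

theorem DKm_mul_apply (r : ℝ) (X : M2) (i j : Fin 2) :
    (DKm r * X) i j = C (![r⁻¹, r] i) * X i j := by
  rw [DKm, Matrix.diagonal_mul]
  fin_cases i <;> rfl

theorem γm_γm (a b : ℝ) (A : M2) : γm a (γm b A) = γm (a * b) A := by
  simp only [γm, ← DKm_mul, Matrix.mul_inv_rev, mul_assoc]

theorem γm_one (A : M2) : γm 1 A = A := by
  simp [γm, DKm_one]

theorem γm_inv_γm {c : ℝ} (hc : c ≠ 0) (A : M2) : γm c⁻¹ (γm c A) = A := by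
  rw [γm_γm, inv_mul_cancel₀ hc, γm_one]

theorem γm_eq_one_iff {c : ℝ} (hc : c ≠ 0) {A : M2} : γm c A = 1 ↔ A = 1 := by
  have hone : ∀ {c : ℝ}, c ≠ 0 → γm c 1 = 1 := fun hc => by
    rw [γm, mul_one, DKm_inv hc, DKm_mul, mul_inv_cancel₀ hc, DKm_one]
  refine ⟨fun h => ?_, fun h => by rw [h, hone hc]⟩
  rw [← γm_inv_γm hc A, h, hone (inv_ne_zero hc)]

theorem γm_umat {c : ℝ} (hc : c ≠ 0) (s : R2) : γm c (umat s) = umat (C (c⁻¹ * c⁻¹) * s) := by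
  rw [γm, DKm_inv hc]
  ext i j : 1
  fin_cases i <;> fin_cases j <;> simp [DKm, umat, ← _root_.map_mul, hc]
  rw [_root_.map_mul]
  ring

theorem γm_lmat {c : ℝ} (hc : c ≠ 0) (s : R2) : γm c (lmat s) = lmat (C (c * c) * s) := by
  rw [γm, DKm_inv hc]
  ext i j : 1
  fin_cases i <;> fin_cases j <;> simp [DKm, lmat, ← _root_.map_mul, hc]
  rw [_root_.map_mul]
  ring

theorem isUpper_γm_iff {c : ℝ} (hc : c ≠ 0) {A : M2} : IsUpper (γm c A) ↔ IsUpper A := by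
  have key : ∀ {c : ℝ} {A : M2}, c ≠ 0 → IsUpper A → IsUpper (γm c A) :=
    fun hc ⟨s, hs⟩ => ⟨_, hs ▸ γm_umat hc s⟩
  exact ⟨fun h => γm_inv_γm hc A ▸ key (inv_ne_zero hc) h, key hc⟩

theorem isLower_γm_iff {c : ℝ} (hc : c ≠ 0) {A : M2} : IsLower (γm c A) ↔ IsLower A := by
  have key : ∀ {c : ℝ} {A : M2}, c ≠ 0 → IsLower A → IsLower (γm c A) :=
    fun hc ⟨s, hs⟩ => ⟨_, hs ▸ γm_lmat hc s⟩
  exact ⟨fun h => γm_inv_γm hc A ▸ key (inv_ne_zero hc) h, key hc⟩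

theorem DKm_mul_list_prod {c : ℝ} (hc : c ≠ 0) (l : List M2) :
    DKm c * l.prod = (l.map (γm c)).prod * DKm c := by
  induction l with
  | nil => simp
  | cons A l ih =>
    rw [List.prod_cons, List.map_cons, List.prod_cons, mul_assoc, ← ih, γm, DKm_inv hc]
    simp only [mul_assoc, ← mul_assoc (DKm c⁻¹), DKm_mul, inv_mul_cancel₀ hc, DKm_one, one_mul]

theorem DKm_mul_prodRev {c : ℝ} (hc : c ≠ 0) {N : ℕ} (SS : Fin N → M2) :
    DKm c * prodRev SS = prodRev (fun i => γm c (SS i)) * DKm c := by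
  rw [prodRev, prodRev, DKm_mul_list_prod hc, List.map_reverse, List.map_ofFn]
  rfl

theorem prodRev_mul_DKm {c : ℝ} (hc : c ≠ 0) {N : ℕ} (SS : Fin N → M2) :
    prodRev SS * DKm c = DKm c * prodRev (fun i => γm c⁻¹ (SS i)) := by
  calc prodRev SS * DKm c = DKm c * (DKm c⁻¹ * prodRev SS) * DKm c := by
        rw [← mul_assoc, DKm_mul, mul_inv_cancel₀ hc, DKm_one, one_mul]
    _ = DKm c * prodRev (fun i => γm c⁻¹ (SS i)) := by
        rw [DKm_mul_prodRev (inv_ne_zero hc), mul_assoc, mul_assoc, DKm_mul,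
          inv_mul_cancel₀ hc, DKm_one, mul_one]

theorem coeff_C_mul (c : ℝ) (f : R2) : (C c * f).coeff = c • f.coeff := by
  rw [← smul_eq_C_mul, AddMonoidAlgebra.coeff_smul]

theorem lev_C_mul (x c : ℝ) (f : R2) : lev x (C c * f) = c * lev x f := by
  rw [lev, lev, coeff_C_mul, Finsupp.sum_smul_index' (fun _ => zero_mul _), Finsupp.mul_sum]
  simp only [smul_eq_mul, mul_assoc]

theorem morder_DKm_mul {r : ℝ} (hr : r ≠ 0) (X : M2) : morder (DKm r * X) = morder X := by
  have hsupp : msupp (DKm r * X) = msupp X := by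
    refine Finset.biUnion_congr rfl fun ⟨i, j⟩ _ => ?_
    have hri : ![r⁻¹, r] i ≠ 0 := by fin_cases i <;> simp [hr]
    rw [DKm_mul_apply, coeff_C_mul, Finsupp.support_smul_eq hri]
  rw [morder, morder, hsupp]

theorem eq_one_of_lev_DKm_mul_apply {r z : ℝ} {B : M2} {i j : Fin 2}
    (h : lev z ((DKm r * B) i j) = lev z (B i j)) (hne : lev z (B i j) ≠ 0) : r = 1 := by
  rw [DKm_mul_apply, lev_C_mul] at h
  have hri : ![r⁻¹, r] i = 1 := mul_right_cancel₀ hne (h.trans (one_mul _).symm)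
  fin_cases i
  · exact inv_eq_one.mp hri
  · exact hri

theorem partialE_eq_take {N : ℕ} (SS : Fin N → M2) (B : M2) {n : ℕ} (hn : n ≤ N) :
    partialE SS B n = ((List.ofFn SS).take n).reverse.prod * B := by
  induction n with
  | zero => simp [partialE]
  | succ n ih =>
    have hnN : n < N := hn
    rw [partialE, dif_pos hnN, ih hnN.le, List.take_add_one,
      List.getElem?_eq_getElem (by simpa using hnN)]
    simp [mul_assoc]

theorem partialE_eq_prodRev_mul {N : ℕ} (SS : Fin N → M2) (B : M2) :
    partialE SS B N = prodRev SS * B := by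
  rw [partialE_eq_take SS B le_rfl, List.take_of_length_le (by simp), prodRev]

namespace GLS

variable {G : GLS}

theorem IrrCas.map_γm (hD : G.DInv) {c : ℝ} (hc : c ≠ 0) {N : ℕ} {SS : Fin N → M2}
    (hSS : G.IrrCas SS) : G.IrrCas fun i => γm c (SS i) := by
  refine ⟨fun i => ⟨?_, (γm_eq_one_iff hc).not.mpr (hSS.1 i).2⟩, fun i h => ?_⟩
  · rw [← (hD c hc).1, ← (hD c hc).2]
    exact (hSS.1 i).1.imp (Set.mem_image_of_mem _) (Set.mem_image_of_mem _)
  · simpa only [isUpper_γm_iff hc, isLower_γm_iff hc] using hSS.2 i h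

def upperSubgroup (G : GLS) : Subgroup SL2 where
  carrier := {x | (x : M2) ∈ G.Uset}
  mul_mem' := by
    rintro x y ⟨a, ha, hx⟩ ⟨b, hb, hy⟩
    exact ⟨a + b, add_mem ha hb, by rw [Matrix.SpecialLinearGroup.coe_mul, ← hx, ← hy, umat_mul]⟩
  one_mem' := ⟨0, zero_mem _, umat_zero⟩
  inv_mem' := by
    rintro x ⟨a, ha, hx⟩
    exact ⟨-a, neg_mem ha, by rw [Matrix.SpecialLinearGroup.coe_inv, ← hx, adjugate_umat]⟩

def lowerSubgroup (G : GLS) : Subgroup SL2 where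
  carrier := {x | (x : M2) ∈ G.Lset}
  mul_mem' := by
    rintro x y ⟨a, ha, hx⟩ ⟨b, hb, hy⟩
    exact ⟨a + b, add_mem ha hb, by rw [Matrix.SpecialLinearGroup.coe_mul, ← hx, ← hy, lmat_mul]⟩
  one_mem' := ⟨0, zero_mem _, lmat_zero⟩
  inv_mem' := by
    rintro x ⟨a, ha, hx⟩
    exact ⟨-a, neg_mem ha, by rw [Matrix.SpecialLinearGroup.coe_inv, ← hx, adjugate_lmat]⟩

theorem disjoint_upperSubgroup_lowerSubgroup : Disjoint G.upperSubgroup G.lowerSubgroup := by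
  rw [Subgroup.disjoint_def]
  rintro x ⟨a, -, hxa⟩ ⟨b, -, hxb⟩
  have hb : b = 0 := (eq_zero_of_umat_eq_lmat (hxa.trans hxb.symm)).2
  exact Subtype.ext (by rw [← hxb, hb, lmat_zero, Matrix.SpecialLinearGroup.coe_one])

theorem isUpper_coe_iff {x : SL2} (hx : x ∈ G.upperSubgroup ∨ x ∈ G.lowerSubgroup) (h1 : x ≠ 1) :
    IsUpper (x : M2) ↔ x ∈ G.upperSubgroup := by
  refine ⟨fun ⟨s, hs⟩ => hx.resolve_right ?_, fun ⟨a, _, ha⟩ => ⟨a, ha.symm⟩⟩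
  rintro ⟨b, -, hb⟩
  have hb0 : b = 0 := (eq_zero_of_umat_eq_lmat (hs.symm.trans hb.symm)).2
  exact h1 (Subtype.ext (by rw [← hb, hb0, lmat_zero, Matrix.SpecialLinearGroup.coe_one]))

theorem isLower_coe_iff {x : SL2} (hx : x ∈ G.upperSubgroup ∨ x ∈ G.lowerSubgroup) (h1 : x ≠ 1) :
    IsLower (x : M2) ↔ x ∉ G.upperSubgroup := by
  refine ⟨fun ⟨s, hs⟩ ⟨a, _, ha⟩ => ?_, fun hU => ?_⟩
  · have ha0 : a = 0 := (eq_zero_of_umat_eq_lmat (ha.trans hs)).1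
    exact h1 (Subtype.ext (by rw [← ha, ha0, umat_zero, Matrix.SpecialLinearGroup.coe_one]))
  · obtain ⟨b, -, hb⟩ := hx.resolve_left hU
    exact ⟨b, hb.symm⟩

def IsCascade (G : GLS) (l : List M2) : Prop :=
  (∀ A ∈ l, A ∈ G.Uset ∪ G.Lset ∧ A ≠ 1) ∧
    l.IsChain fun A B => ¬(IsUpper A ∧ IsUpper B) ∧ ¬(IsLower A ∧ IsLower B)

theorem irrCas_iff_isCascade_ofFn {N : ℕ} (SS : Fin N → M2) :
    G.IrrCas SS ↔ G.IsCascade (List.ofFn SS) := by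
  simp [IrrCas, IsCascade, Alternating, AlternatingP, List.isChain_iff_getElem]

theorem isCascade_map_coe_iff (w : List SL2) :
    G.IsCascade (w.map fun x : SL2 => (x : M2)) ↔
      IsReducedWord G.upperSubgroup G.lowerSubgroup w := by
  have hletter : ∀ x : SL2, (x : M2) ∈ G.Uset ∪ G.Lset ∧ (x : M2) ≠ 1 ↔
      x ≠ 1 ∧ (x ∈ G.upperSubgroup ∨ x ∈ G.lowerSubgroup) := fun x => by
    rw [and_comm, ← Matrix.SpecialLinearGroup.coe_one, SL2.coe_ne_coe_iff]; rfl
  simp only [IsCascade, IsReducedWord, List.forall_mem_map, List.isChain_map, hletter]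
  refine and_congr_right fun hw => List.IsChain.iff_of_mem_imp fun x y hx hy => ?_
  rw [isUpper_coe_iff (hw x hx).2 (hw x hx).1, isUpper_coe_iff (hw y hy).2 (hw y hy).1,
    isLower_coe_iff (hw x hx).2 (hw x hx).1, isLower_coe_iff (hw y hy).2 (hw y hy).1, ne_eq,
    eq_iff_iff]
  tauto

theorem OrderInc.morder_lt_prodRev_mul (hOI : G.OrderInc) {B : M2} (hB : B ∈ G.Bset) {N : ℕ}
    {SS : Fin N → M2} (hSS : G.IrrCas SS) (hN : 0 < N) :
    morder B < morder (prodRev SS * B) := by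
  have hmono : StrictMonoOn (fun n => morder (partialE SS B n)) (Set.Iic N) :=
    strictMonoOn_Iic_of_lt_succ fun n hn => by
      simpa [Order.succ_eq_add_one] using hOI B hB N SS hSS n hn
  simpa [partialE, partialE_eq_prodRev_mul] using
    hmono (Set.mem_Iic.mpr (Nat.zero_le N)) (Set.mem_Iic.mpr le_rfl) hN

def scaledBset (G : GLS) : Set M2 := {X | ∃ β : ℝ, β ≠ 0 ∧ ∃ B ∈ G.Bset, X = DKm β * B}

theorem morder_lt_prodRev_mul (hD : G.DInv) (hOI : G.OrderInc) {X : M2} (hX : X ∈ G.scaledBset)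
    {N : ℕ} {SS : Fin N → M2} (hSS : G.IrrCas SS) (hN : 0 < N) :
    morder X < morder (prodRev SS * X) := by
  obtain ⟨β, hβ, B, hB, rfl⟩ := hX
  rw [← mul_assoc, prodRev_mul_DKm hβ, mul_assoc, morder_DKm_mul hβ, morder_DKm_mul hβ]
  exact hOI.morder_lt_prodRev_mul hB (hSS.map_γm hD (inv_ne_zero hβ)) hN

theorem morder_lt_prod_mul (hD : G.DInv) (hOI : G.OrderInc) {w : List SL2} (hw0 : w ≠ [])
    (hw : IsReducedWord G.upperSubgroup G.lowerSubgroup w) {X : M2} (hX : X ∈ G.scaledBset) :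
    morder X < morder ((w.prod : M2) * X) := by
  generalize hl : (w.reverse.map fun x : SL2 => (x : M2)) = l
  have hSS : G.IrrCas l.get := by
    rw [irrCas_iff_isCascade_ofFn, List.ofFn_get, ← hl, isCascade_map_coe_iff]
    exact hw.reverse
  have hprod : prodRev l.get = (w.prod : M2) := by
    rw [prodRev, List.ofFn_get, ← hl, List.map_reverse, List.reverse_reverse, SL2.coe_list_prod]
  rw [← hprod]
  exact morder_lt_prodRev_mul hD hOI hX hSS (by simpa [← hl, List.length_pos_iff] using hw0)

theorem prod_mul_ne (hD : G.DInv) (hOI : G.OrderInc) {w : List SL2} (hw0 : w ≠ [])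
    (hw : IsReducedWord G.upperSubgroup G.lowerSubgroup w) {X Y : M2} (hX : X ∈ G.scaledBset)
    (hY : Y ∈ G.scaledBset) : (w.prod : M2) * X ≠ Y := by
  intro h
  have hinv : (((w.map (·⁻¹)).reverse.prod : SL2) : M2) * Y = X := by
    rw [← List.prod_inv_reverse, ← h, SL2.coe_inv_mul_cancel_left]
  have hXY := morder_lt_prod_mul hD hOI hw0 hw hX
  have hYX := morder_lt_prod_mul hD hOI (by simpa using hw0) hw.map_inv.reverse hY
  rw [h] at hXY
  rw [hinv] at hYX
  exact lt_asymm hXY hYX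

theorem IrrCas.exists_isReducedWord {N : ℕ} {SS : Fin N → M2} (hSS : G.IrrCas SS) :
    ∃ w : List SL2, IsReducedWord G.upperSubgroup G.lowerSubgroup w ∧
      (w.map fun x : SL2 => (x : M2)) = (List.ofFn SS).reverse := by
  have hdet : ∀ i, (SS i).det = 1 := fun i => by
    rcases (hSS.1 i).1 with ⟨a, -, ha⟩ | ⟨a, -, ha⟩
    · rw [← ha, det_umat]
    · rw [← ha, det_lmat]
  obtain ⟨x, hx⟩ : ∃ x : Fin N → SL2, (fun i => (x i : M2)) = SS :=
    ⟨fun i => ⟨SS i, hdet i⟩, rfl⟩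
  have hmap : ((List.ofFn x).map fun x : SL2 => (x : M2)) = List.ofFn SS := by
    rw [List.map_ofFn, ← hx]
    rfl
  refine ⟨(List.ofFn x).reverse, IsReducedWord.reverse ?_, by rw [List.map_reverse, hmap]⟩
  rw [← isCascade_map_coe_iff, hmap, ← irrCas_iff_isCascade_ofFn]
  exact hSS

theorem ofFn_eq_and_eq_of_prodRev_mul_eq (hD : G.DInv) (hOI : G.OrderInc) {N N' : ℕ}
    {SS : Fin N → M2} {SS' : Fin N' → M2} (hSS : G.IrrCas SS) (hSS' : G.IrrCas SS') {X Y : M2}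
    (hX : X ∈ G.scaledBset) (hY : Y ∈ G.scaledBset) (h : prodRev SS * X = prodRev SS' * Y) :
    List.ofFn SS = List.ofFn SS' ∧ X = Y := by
  obtain ⟨l, hl, hlSS⟩ := hSS.exists_isReducedWord
  obtain ⟨m, hm, hmSS⟩ := hSS'.exists_isReducedWord
  rw [prodRev, prodRev, ← hlSS, ← hmSS, ← SL2.coe_list_prod, ← SL2.coe_list_prod] at h
  obtain rfl : l = m := by
    by_contra hne
    obtain ⟨w, hw0, hw, hw_prod⟩ :=
      hl.exists_prod_eq_inv_mul disjoint_upperSubgroup_lowerSubgroup hm hne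
    apply prod_mul_ne hD hOI hw0 hw hX hY
    rw [hw_prod, Matrix.SpecialLinearGroup.coe_mul, mul_assoc, h, SL2.coe_inv_mul_cancel_left]
  refine ⟨List.reverse_injective (hlSS.symm.trans hmSS), ?_⟩
  rw [← SL2.coe_inv_mul_cancel_left l.prod X, h, SL2.coe_inv_mul_cancel_left]

end GLS

theorem eq_DKm_div_mul_of_DKm_mul_eq {K K' : ℝ} (hK' : K' ≠ 0) {B B' : M2}
    (h : DKm K * B = DKm K' * B') : B' = DKm (K / K') * B := by
  rw [div_eq_inv_mul, ← DKm_mul, mul_assoc, h, ← mul_assoc, DKm_mul, inv_mul_cancel₀ hK', DKm_one,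
    one_mul]

theorem eq_γm_div_of_γm_eq {K K' : ℝ} (hK' : K' ≠ 0) {A A' : M2} (h : γm K A = γm K' A') :
    A' = γm (K / K') A := by
  rw [div_eq_inv_mul, ← γm_γm, h, γm_inv_γm hK']

/-- cf. Brislawn, GLS-I, Theorem 1; uniqueness of irreducible
group lifting factorizations.  In a `𝒟`-invariant, order-increasing group lifting
structure, two irreducible group lifting factorizations of the same transfer
matrix agree modulo rescaling; if moreover the two base filter banks share a
nonzero entry value at some `z₀ ≠ 0`, the factorizations are identical. -/
theorem stmt9 (G : GLS) (hD : G.DInv) (hOI : G.OrderInc)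
    (H : M2) (K K' : ℝ) (hK : K ≠ 0) (hK' : K' ≠ 0)
    (N N' : ℕ) (SS : Fin N → M2) (SS' : Fin N' → M2) (B B' : M2)
    (hB : B ∈ G.Bset) (hB' : B' ∈ G.Bset)
    (hIrr : G.IrrCas SS) (hIrr' : G.IrrCas SS')
    (hf : H = DKm K * prodRev SS * B) (hf' : H = DKm K' * prodRev SS' * B') :
    N' = N ∧
    B' = DKm (K / K') * B ∧
    (∀ (i : ℕ) (h : i < N) (h' : i < N'), SS' ⟨i, h'⟩ = γm (K / K') (SS ⟨i, h⟩)) ∧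
    ((∃ (i j : Fin 2) (z₀ : ℝ), z₀ ≠ 0 ∧
        lev z₀ (B' i j) = lev z₀ (B i j) ∧ lev z₀ (B i j) ≠ 0) →
      K' = K ∧ B' = B ∧
        ∀ (i : ℕ) (h : i < N) (h' : i < N'), SS' ⟨i, h'⟩ = SS ⟨i, h⟩) := by
  have heq : prodRev (fun i => γm K (SS i)) * (DKm K * B) =
      prodRev (fun i => γm K' (SS' i)) * (DKm K' * B') := by
    rw [← mul_assoc, ← DKm_mul_prodRev hK, ← mul_assoc, ← DKm_mul_prodRev hK', ← hf, ← hf']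
  obtain ⟨hcascades, hbases⟩ := G.ofFn_eq_and_eq_of_prodRev_mul_eq hD hOI (hIrr.map_γm hD hK)
    (hIrr'.map_γm hD hK') ⟨K, hK, B, hB, rfl⟩ ⟨K', hK', B', hB', rfl⟩ heq
  obtain rfl : N' = N := by simpa using (congrArg List.length hcascades).symm
  have hB'eq := eq_DKm_div_mul_of_DKm_mul_eq hK' hbases
  have hSS' : ∀ i, SS' i = γm (K / K') (SS i) := fun i =>
    eq_γm_div_of_γm_eq hK' (congrFun (List.ofFn_injective hcascades) i)
  refine ⟨rfl, hB'eq, fun i h _ => hSS' ⟨i, h⟩, ?_⟩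
  rintro ⟨i, j, z₀, -, hlev, hne⟩
  have hratio : K / K' = 1 := eq_one_of_lev_DKm_mul_apply (hB'eq ▸ hlev) hne
  rw [hratio, DKm_one, one_mul] at hB'eq
  refine ⟨((div_eq_one_iff_eq hK').mp hratio).symm, hB'eq, fun i h _ => ?_⟩
  rw [hSS' ⟨i, h⟩, hratio, γm_one]
end
end
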